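/- Let G be a graph from the list L with bundle B and let A ∈ A(G). For every cover relation I ⋖ J in the poset P^even_{G,A}, if (J ∖ I) ∩ B ≠ ∅, then (J ∖ I) ∩ (B ∩ A) = ∅ or (J ∖ I) ∩ (B ∖ A) = ∅; that is, J ∖ I cannot contain both an element of B ∩ A and an element of B ∖ A. -/

import Mathlib

open Classical

set_option maxHeartbeats 1000000

/-- A finite multigraph without loops: `fst e` and `snd e` are the two (distinct)
endpoints of the edge `e`. -/
structure Multigraph where
  V : Type
  E : Type
  [fintypeV : Fintype V]
  [decEqV : DecidableEq V]
  [fintypeE : Fintype E]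
  [decEqE : DecidableEq E]
  fst : E → V
  snd : E → V
  no_loop : ∀ e, fst e ≠ snd e

attribute [instance] Multigraph.fintypeV Multigraph.decEqV Multigraph.fintypeE Multigraph.decEqE

namespace Multigraph

variable (G : Multigraph)

/-- The ground set: vertices together with edges. -/
abbrev El : Type := G.V ⊕ G.E

/-- Two edges have the same (unordered) pair of endpoints. -/
def sameEnds (e e' : G.E) : Prop :=
  (G.fst e = G.fst e' ∧ G.snd e = G.snd e') ∨ (G.fst e = G.snd e' ∧ G.snd e = G.fst e')

/-- An edge is a multiple edge if some other edge has the same endpoints. -/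
def Multiple (e : G.E) : Prop := ∃ e', e' ≠ e ∧ G.sameEnds e e'

/-- A simple graph has no multiple edges. -/
def Simple : Prop := ∀ e, ¬ G.Multiple e

/-- A bundle: a maximal set of multiple edges with the same pair of endpoints. -/
def IsBundle (B : Set G.E) : Prop := ∃ e, G.Multiple e ∧ B = {e' | G.sameEnds e e'}

/-- Adjacency of vertices. -/
def adj (u v : G.V) : Prop :=
  ∃ e, (G.fst e = u ∧ G.snd e = v) ∨ (G.fst e = v ∧ G.snd e = u)

def reachable : G.V → G.V → Prop := Relation.ReflTransGen G.adj

def Connected : Prop := Nonempty G.V ∧ ∀ u v : G.V, G.reachable u v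

/-- Existence of a walk of length exactly `k`. -/
def reachN (G : Multigraph) : ℕ → G.V → G.V → Prop
  | 0, u, v => u = v
  | k + 1, u, v => ∃ w, G.adj u w ∧ G.reachN k w v

/-- Graph distance. -/
noncomputable def dist (u v : G.V) : ℕ := sInf {k | G.reachN k u v}

def adjOn (W : Set G.V) (u v : G.V) : Prop := u ∈ W ∧ v ∈ W ∧ G.adj u v

/-- The set `W` of vertices induces a connected subgraph. -/
def ConnectedOn (W : Set G.V) : Prop :=
  ∀ u ∈ W, ∀ w ∈ W, Relation.ReflTransGen (G.adjOn W) u w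

/-- The subset of the ground set representing the whole graph:
all vertices together with all multiple edges. -/
def topSet : Set G.El := {x | ∀ e, x = Sum.inr e → G.Multiple e}

/-- `S ⊆ C_G` represents a semi-induced subgraph: its edges are multiple edges with both
endpoints among its vertices, and between any two of its vertices joined by a bundle of `G`
it contains at least one edge of the bundle (simple edges are implicitly included). -/
def SemiInduced (S : Set G.El) : Prop :=
  (∀ e, Sum.inr e ∈ S → G.Multiple e ∧ Sum.inl (G.fst e) ∈ S ∧ Sum.inl (G.snd e) ∈ S) ∧
  (∀ e, G.Multiple e → Sum.inl (G.fst e) ∈ S → Sum.inl (G.snd e) ∈ S →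
    ∃ e', G.sameEnds e e' ∧ Sum.inr e' ∈ S)

/-- Adjacency of two vertices inside the semi-induced subgraph represented by `S`. -/
def adjIn (S : Set G.El) (u v : G.V) : Prop :=
  Sum.inl u ∈ S ∧ Sum.inl v ∈ S ∧
    ∃ e, ((G.fst e = u ∧ G.snd e = v) ∨ (G.fst e = v ∧ G.snd e = u)) ∧
      (G.Multiple e → Sum.inr e ∈ S)

/-- The connected component of the vertex `v` inside the semi-induced subgraph `S`,
as a subset of the ground set. -/
def componentIn (S : Set G.El) (v : G.V) : Set G.El :=
  {x | (∃ u, x = Sum.inl u ∧ Relation.ReflTransGen (G.adjIn S) v u) ∨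
       (∃ e, x = Sum.inr e ∧ Sum.inr e ∈ S ∧ Relation.ReflTransGen (G.adjIn S) v (G.fst e))}

/-- `S` is an `A`-even semi-induced subgraph. -/
def AEvenMember (A S : Set G.El) : Prop :=
  G.SemiInduced S ∧ ∀ v, Sum.inl v ∈ S → Even ((G.componentIn S v ∩ A).ncard)

/-- `A` is an admissible collection for `G`. -/
def Admissible (A : Set G.El) : Prop :=
  (∀ e, Sum.inr e ∈ A → G.Multiple e) ∧
  (∀ v : G.V, Even ({u : G.V | G.reachable v u ∧ Sum.inl u ∈ A}.ncard)) ∧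
  (∀ v : G.V, (∀ e, (G.fst e = v ∨ G.snd e = v) → ¬ G.Multiple e) → Sum.inl v ∈ A) ∧
  (∀ e, G.Multiple e →
    (∃ e', G.sameEnds e e' ∧ Sum.inr e' ∈ A) ∧
      Even ({e' | G.sameEnds e e' ∧ Sum.inr e' ∈ A}.ncard))

end Multigraph

/-- The poset of `A`-even semi-induced subgraphs of `G`, including `∅` and `G` itself,
ordered by containment. -/
def EvenPoset (G : Multigraph) (A : Set G.El) : Type :=
  {S : Set G.El // S = ∅ ∨ S = G.topSet ∨ G.AEvenMember A S}

namespace EvenPoset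

instance (G : Multigraph) (A : Set G.El) : PartialOrder (EvenPoset G A) :=
  Subtype.partialOrder _

instance (G : Multigraph) (A : Set G.El) : BoundedOrder (EvenPoset G A) where
  top := ⟨G.topSet, Or.inr (Or.inl rfl)⟩
  le_top := by
    rintro ⟨S, hS⟩
    show S ⊆ G.topSet
    rcases hS with rfl | rfl | hS
    · exact Set.empty_subset _
    · exact subset_rfl
    · intro x hx
      intro e he
      subst he
      exact (hS.1.1 e hx).1
  bot := ⟨(∅ : Set G.El), Or.inl rfl⟩
  bot_le := by
    rintro ⟨S, hS⟩
    show (∅ : Set G.El) ⊆ S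
    exact Set.empty_subset _

end EvenPoset
/-- An isomorphism of multigraphs. -/
structure Multigraph.Iso (G H : Multigraph) where
  vEquiv : G.V ≃ H.V
  eEquiv : G.E ≃ H.E
  ends : ∀ e, (H.fst (eEquiv e) = vEquiv (G.fst e) ∧ H.snd (eEquiv e) = vEquiv (G.snd e)) ∨
              (H.fst (eEquiv e) = vEquiv (G.snd e) ∧ H.snd (eEquiv e) = vEquiv (G.fst e))

/-- The connected component of the vertex `v`, as a multigraph. -/
noncomputable def Multigraph.componentGraph (G : Multigraph) (v : G.V) : Multigraph where
  V := {u // G.reachable v u}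
  E := {e // G.reachable v (G.fst e)}
  fintypeV := Fintype.ofFinite _
  decEqV := fun a b => decidable_of_iff (a.1 = b.1) Subtype.ext_iff.symm
  fintypeE := Fintype.ofFinite _
  decEqE := fun a b => decidable_of_iff (a.1 = b.1) Subtype.ext_iff.symm
  fst := fun e => ⟨G.fst e.1, e.2⟩
  snd := fun e => ⟨G.snd e.1, Relation.ReflTransGen.tail e.2 ⟨e.1, Or.inl ⟨rfl, rfl⟩⟩⟩
  no_loop := fun e h => G.no_loop e.1 (congrArg Subtype.val h)

/-- A specification of a partial underlying induced subgraph (PI-graph) of `G`: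
a set `W` of vertices together with a set `R` of retained edges, such that every `G`-edge
between vertices of `W` has a parallel retained edge, and each bundle inside `W`
is either fully retained or replaced by a single (simple) edge. -/
structure PISpec (G : Multigraph) where
  W : Set G.V
  R : Set G.E
  endpoints_mem : ∀ e ∈ R, G.fst e ∈ W ∧ G.snd e ∈ W
  keeps : ∀ e, G.fst e ∈ W → G.snd e ∈ W → ∃ e' ∈ R, G.sameEnds e e'
  bundle_cond : ∀ e ∈ R, (∀ e', G.sameEnds e e' → e' ∈ R) ∨ (∀ e' ∈ R, G.sameEnds e e' → e' = e)

/-- The PI-graph determined by a `PISpec`. -/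
noncomputable def PISpec.toGraph {G : Multigraph} (s : PISpec G) : Multigraph where
  V := {v // v ∈ s.W}
  E := {e // e ∈ s.R}
  fintypeV := Fintype.ofFinite _
  decEqV := fun a b => decidable_of_iff (a.1 = b.1) Subtype.ext_iff.symm
  fintypeE := Fintype.ofFinite _
  decEqE := fun a b => decidable_of_iff (a.1 = b.1) Subtype.ext_iff.symm
  fst := fun e => ⟨G.fst e.1, (s.endpoints_mem e.1 e.2).1⟩
  snd := fun e => ⟨G.snd e.1, (s.endpoints_mem e.1 e.2).2⟩
  no_loop := fun e h => G.no_loop e.1 (congrArg Subtype.val h)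

section Shelling

variable {α : Type*}

/-- A finset is a chain of the poset. -/
def IsChainFinset [Preorder α] (s : Finset α) : Prop :=
  ∀ x ∈ s, ∀ y ∈ s, x ≤ y ∨ y ≤ x

/-- The order complex of a poset: the complex of its chains. -/
def orderComplex (α : Type*) [Preorder α] : Set (Finset α) := {s | IsChainFinset s}

/-- A facet (maximal face) of a simplicial complex. -/
def IsFacet (K : Set (Finset α)) (F : Finset α) : Prop :=
  F ∈ K ∧ ∀ F' ∈ K, F ⊆ F' → F = F'

/-- `l` is a shelling order of the complex `K` (nonpure shellability of Björner–Wachs):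
it enumerates the facets of `K` so that for every `k ≥ 1`, the intersection of the `k`-th
facet with the union of the earlier ones is pure of dimension `dim F_k - 1`. -/
def IsShelling (K : Set (Finset α)) (l : List (Finset α)) : Prop :=
  l.Nodup ∧ (∀ F, F ∈ l ↔ IsFacet K F) ∧
  ∀ k (hk : k < l.length), 1 ≤ k →
    ∀ S : Finset α, S ⊆ l.get ⟨k, hk⟩ →
      (∃ i, ∃ hi : i < l.length, i < k ∧ S ⊆ l.get ⟨i, hi⟩) →
      ∃ T : Finset α, T ⊆ l.get ⟨k, hk⟩ ∧ T.card + 1 = (l.get ⟨k, hk⟩).card ∧ S ⊆ T ∧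
        ∃ i, ∃ hi : i < l.length, i < k ∧ T ⊆ l.get ⟨i, hi⟩

def ComplexShellable (K : Set (Finset α)) : Prop := ∃ l, IsShelling K l

/-- A poset is shellable if its order complex is shellable. -/
def PosetShellable (α : Type*) [Preorder α] : Prop := ComplexShellable (orderComplex α)

end Shelling

/-- The family `𝒢*`: all graphs `G` such that the poset of `A`-even subgraphs is shellable
for every PI-graph `H` of `G` and every admissible collection `A` of `H`. -/
def GStar (G : Multigraph) : Prop :=
  ∀ s : PISpec G, ∀ A : Set s.toGraph.El,
    s.toGraph.Admissible A → PosetShellable (EvenPoset s.toGraph A)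
/-- A graph on vertex set `Fin n` with a bundle of `m` parallel edges between the
vertices `0` and `1`, and `k` further simple edges given by the endpoint functions `f, g`. -/
def mkGraph (n m k : ℕ) (hn : 2 ≤ n) (f g : ℕ → ℕ)
    (hf : ∀ i, i < k → f i < n) (hg : ∀ i, i < k → g i < n)
    (hfg : ∀ i, i < k → f i ≠ g i) : Multigraph where
  V := Fin n
  E := Fin m ⊕ Fin k
  fst := Sum.elim (fun _ => ⟨0, by omega⟩) (fun i => ⟨f i.1, hf i.1 i.2⟩)
  snd := Sum.elim (fun _ => ⟨1, by omega⟩) (fun i => ⟨g i.1, hg i.1 i.2⟩)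
  no_loop := by
    rintro (e | e) h
    · have h0 : (0 : ℕ) = 1 := congrArg Fin.val h
      omega
    · exact hfg e.1 e.2 (congrArg Fin.val h)

/-- `P̃_{n+2,m}`: the path on `n+2` vertices `0,1,…,n+1` whose first edge is replaced by a
bundle of `m` parallel edges between `0` and `1`. -/
def tildeP (n m : ℕ) : Multigraph :=
  mkGraph (n + 2) m n (by omega) (fun i => i + 1) (fun i => i + 2)
    (fun i hi => by omega) (fun i hi => by omega) (fun i hi => by omega)

/-- `P̃′_{n+3,m}`: `P̃_{n+3,m}` with an extra simple edge `u₁u₃` (i.e. between `0` and `2`). -/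
def tildeP' (n m : ℕ) : Multigraph :=
  mkGraph (n + 3) m (n + 2) (by omega)
    (fun i => if i ≤ n then i + 1 else 0)
    (fun i => if i ≤ n then i + 2 else 2)
    (fun i hi => by split_ifs <;> omega)
    (fun i hi => by split_ifs <;> omega)
    (fun i hi => by split_ifs <;> omega)

/-- `S̃_{2j+5,m}`: the bundle `0,1`, the path `1,2,…,2j+3`, and a pendant vertex `2j+4`
attached to `2j+2`. -/
def tildeS (j m : ℕ) : Multigraph :=
  mkGraph (2*j + 5) m (2*j + 3) (by omega)
    (fun i => if i < 2*j + 2 then i + 1 else 2*j + 2)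
    (fun i => if i < 2*j + 2 then i + 2 else 2*j + 4)
    (fun i hi => by split_ifs <;> omega)
    (fun i hi => by split_ifs <;> omega)
    (fun i hi => by split_ifs <;> omega)

/-- `T̃_{2j+5,m}`: `S̃_{2j+5,m}` with the extra edge between `2j+3` and `2j+4`. -/
def tildeT (j m : ℕ) : Multigraph :=
  mkGraph (2*j + 5) m (2*j + 4) (by omega)
    (fun i => if i < 2*j + 2 then i + 1 else if i = 2*j + 2 then 2*j + 2 else 2*j + 3)
    (fun i => if i < 2*j + 2 then i + 2 else 2*j + 4)
    (fun i hi => by split_ifs <;> omega)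
    (fun i hi => by split_ifs <;> omega)
    (fun i hi => by split_ifs <;> omega)

/-- `S̃′_{2j+5,m}`: `S̃_{2j+5,m}` with an extra simple edge between `0` and `2`. -/
def tildeS' (j m : ℕ) : Multigraph :=
  mkGraph (2*j + 5) m (2*j + 4) (by omega)
    (fun i => if i < 2*j + 2 then i + 1 else if i = 2*j + 2 then 2*j + 2 else 0)
    (fun i => if i < 2*j + 2 then i + 2 else if i = 2*j + 2 then 2*j + 4 else 2)
    (fun i hi => by split_ifs <;> omega)
    (fun i hi => by split_ifs <;> omega)
    (fun i hi => by split_ifs <;> omega)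

/-- `T̃′_{2j+5,m}`: `T̃_{2j+5,m}` with an extra simple edge between `0` and `2`. -/
def tildeT' (j m : ℕ) : Multigraph :=
  mkGraph (2*j + 5) m (2*j + 5) (by omega)
    (fun i => if i < 2*j + 2 then i + 1 else if i = 2*j + 2 then 2*j + 2 else
      if i = 2*j + 3 then 2*j + 3 else 0)
    (fun i => if i < 2*j + 2 then i + 2 else if i ≤ 2*j + 3 then 2*j + 4 else 2)
    (fun i hi => by split_ifs <;> omega)
    (fun i hi => by split_ifs <;> omega)
    (fun i hi => by split_ifs <;> omega)

/-- `G` is isomorphic to one of the unprimed graphs `P̃`, `S̃`, `T̃` of the list `L`. -/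
def InL0 (G : Multigraph) : Prop :=
  ∃ m, 2 ≤ m ∧
    ((∃ n, Nonempty (G.Iso (tildeP n m))) ∨ (∃ j, Nonempty (G.Iso (tildeS j m))) ∨
      (∃ j, Nonempty (G.Iso (tildeT j m))))

/-- `G` is isomorphic to one of the primed graphs `P̃′`, `S̃′`, `T̃′` of the list `L`. -/
def InL1 (G : Multigraph) : Prop :=
  ∃ m, 2 ≤ m ∧
    ((∃ n, Nonempty (G.Iso (tildeP' n m))) ∨ (∃ j, Nonempty (G.Iso (tildeS' j m))) ∨
      (∃ j, Nonempty (G.Iso (tildeT' j m))))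

/-- `G` is isomorphic to one of the graphs of the list `L`. -/
def InListL (G : Multigraph) : Prop := InL0 G ∨ InL1 G
section CL

variable (P : Type*) [PartialOrder P]

/-- `c` is a saturated chain from `x` to `y`: consecutive elements are covers. -/
def SatChain (x y : P) (c : List P) : Prop :=
  c.Chain' (· ⋖ ·) ∧ c.head? = some x ∧ c.getLast? = some y

variable [BoundedOrder P]

/-- A maximal chain of the bounded poset `P`. -/
def MaxChain : Type _ := {c : List P // SatChain P ⊥ ⊤ c}

variable {P}

/-- The maximal chain `σ` extends the root `r` (a saturated chain from `⊥` to some `x`)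
followed by the saturated chain `c` (from `x` to some `y`). -/
def ChainExtends (σ : MaxChain P) (r c : List P) : Prop := (r ++ c.tail) <+: σ.1

/-- A chain-edge labeling: two maximal chains that coincide along their bottom `d` covers
receive the same labels on those covers. `lab σ i` is the label of the `i`-th cover
of the maximal chain `σ`. -/
def IsChainEdgeLabeling {L : Type} [PartialOrder L] (lab : MaxChain P → ℕ → L) : Prop :=
  ∀ σ τ : MaxChain P, ∀ d : ℕ, σ.1.take (d + 1) = τ.1.take (d + 1) →
    ∀ i, i < d → lab σ i = lab τ i

/-- The chain `c` of the interval rooted at `r` is strictly increasing with respect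
to the labeling `lab`. -/
def SegIncreasing {L : Type} [PartialOrder L] (lab : MaxChain P → ℕ → L)
    (r c : List P) : Prop :=
  ∃ σ : MaxChain P, ChainExtends σ r c ∧
    ∀ i, r.length ≤ i + 1 → i + 4 ≤ r.length + c.length → lab σ i < lab σ (i + 1)

/-- The sequence of labels of the covers of the chain `c` in the interval rooted at `r`,
read off along the extending maximal chain `σ`. -/
def SegLabels {L : Type} (lab : MaxChain P → ℕ → L) (σ : MaxChain P)
    (r c : List P) : List L :=
  (List.range (c.length - 1)).map fun i => lab σ (r.length - 1 + i)

/-- A CL-labeling: a chain-edge labeling such that in every rooted interval there is a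
unique strictly increasing maximal chain, and it lexicographically precedes all other
maximal chains of the rooted interval. -/
def IsCLLabeling {L : Type} [PartialOrder L] (lab : MaxChain P → ℕ → L) : Prop :=
  IsChainEdgeLabeling lab ∧
  ∀ x y : P, x ≤ y → ∀ r : List P, SatChain P ⊥ x r →
    ∃ c : List P, SatChain P x y c ∧ SegIncreasing lab r c ∧
      ∀ c' : List P, SatChain P x y c' → c' ≠ c →
        ¬ SegIncreasing lab r c' ∧
        ∀ σ σ' : MaxChain P, ChainExtends σ r c → ChainExtends σ' r c' →
          List.Lex (· < ·) (SegLabels lab σ r c) (SegLabels lab σ' r c')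

/-- A bounded poset is CL-shellable if it admits a CL-labeling. -/
def CLShellable (P : Type*) [PartialOrder P] [BoundedOrder P] : Prop :=
  ∃ (L : Type) (_ : LinearOrder L) (lab : MaxChain P → ℕ → L), IsCLLabeling lab

end CL

/-- `IntervalRAO x y l`: the list `l` is a recursive atom ordering of the interval `[x,y]`. -/
inductive IntervalRAO {P : Type*} [PartialOrder P] : P → P → List P → Prop where
  | base : ∀ {x y : P}, x ⋖ y → IntervalRAO x y [y]
  | step : ∀ {x y : P} (l : List P) (ls : ℕ → List P), x < y → ¬ x ⋖ y → l.Nodup →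
      (∀ z, z ∈ l ↔ (x ⋖ z ∧ z ≤ y)) →
      (∀ j, ∀ hj : j < l.length, IntervalRAO (l.get ⟨j, hj⟩) y (ls j)) →
      (∀ j, j < l.length →
        ∃ d, ∀ k, ∀ hk : k < (ls j).length,
          (k < d ↔ ∃ i, ∃ hi : i < l.length, i < j ∧ l.get ⟨i, hi⟩ ≤ (ls j).get ⟨k, hk⟩)) →
      (∀ i j, ∀ hi : i < l.length, ∀ hj : j < l.length, i < j →
        ∀ w, l.get ⟨i, hi⟩ ≤ w → l.get ⟨j, hj⟩ ≤ w → w ≤ y →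
          ∃ k, k < j ∧ ∃ hk : k < l.length, ∃ z, l.get ⟨j, hj⟩ ⋖ z ∧ z ≤ w ∧
            l.get ⟨k, hk⟩ < z) →
      IntervalRAO x y l

/-- A bounded poset admits a recursive atom ordering. -/
def HasRAO (P : Type*) [PartialOrder P] [BoundedOrder P] : Prop :=
  ∃ l : List P, IntervalRAO (⊥ : P) ⊤ l
/-- The standard labeling convention for a graph `G` of the list `L` together with an
admissible collection `A`: the vertices are `v 1, …, v n` with the bundle between
`v 1` and `v 2`, the elements of `B ∩ A` are `ea 1, …, ea twoM`, the elements of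
`B ∖ A` are `eb 1, …, eb ell`, each vertex `v i` (`i ≥ 3`) is closest to `v (i-1)`,
`v 1 ∉ A` when `n` is odd, and `v 1` is adjacent to `v 3` when `n` is even. -/
structure StdLabeling (G : Multigraph) (A : Set G.El) where
  n : ℕ
  twoM : ℕ
  ell : ℕ
  hn : 2 ≤ n
  v : ℕ → G.V
  ea : ℕ → G.E
  eb : ℕ → G.E
  vbij : Set.BijOn v (Set.Icc 1 n) Set.univ
  eabij : Set.BijOn ea (Set.Icc 1 twoM) {e | G.Multiple e ∧ Sum.inr e ∈ A}
  ebbij : Set.BijOn eb (Set.Icc 1 ell) {e | G.Multiple e ∧ Sum.inr e ∉ A}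
  bundleEnds : ∀ e, G.Multiple e ↔
    ((G.fst e = v 1 ∧ G.snd e = v 2) ∨ (G.fst e = v 2 ∧ G.snd e = v 1))
  closest : ∀ i, 3 ≤ i → i ≤ n → ∀ j, i ≤ j → j ≤ n →
    G.dist (v (i - 1)) (v i) ≤ G.dist (v (i - 1)) (v j)
  oddA : Odd n → Sum.inl (v 1) ∉ A
  evenAdj : Even n → 3 ≤ n → G.adj (v 1) (v 3)

namespace StdLabeling

variable {G : Multigraph} {A : Set G.El} (L : StdLabeling G A)

/-- The label of a vertex. -/
noncomputable def vIdx (w : G.V) : ℕ := sInf {i | 1 ≤ i ∧ i ≤ L.n ∧ L.v i = w}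

/-- The index of an edge of `B ∩ A`. -/
noncomputable def aIdx (e : G.E) : ℕ := sInf {i | 1 ≤ i ∧ i ≤ L.twoM ∧ L.ea i = e}

/-- The index of an edge of `B ∖ A`. -/
noncomputable def bIdx (e : G.E) : ℕ := sInf {i | 1 ≤ i ∧ i ≤ L.ell ∧ L.eb i = e}

/-- The rank of a ground element in the total order `≺_I` on `V ∪ B`. -/
noncomputable def rank (I : Set G.El) : G.El → ℕ :=
  if ∀ e : G.E, Sum.inr e ∉ I then
    Sum.elim (fun w => L.vIdx w)
      (fun e => if Sum.inr e ∈ A then L.n + L.aIdx e else L.n + L.twoM + L.bIdx e)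
  else if ∀ e : G.E, Sum.inr e ∈ I → Sum.inr e ∈ A then
    Sum.elim
      (fun w => if L.vIdx w ≤ 2 then L.vIdx w
        else sSup {i | 1 ≤ i ∧ i ≤ L.twoM ∧ Sum.inr (L.ea i) ∈ I} + L.vIdx w)
      (fun e => if Sum.inr e ∈ A then
          (if L.aIdx e ≤ sSup {i | 1 ≤ i ∧ i ≤ L.twoM ∧ Sum.inr (L.ea i) ∈ I}
            then 2 + L.aIdx e else L.n + L.aIdx e)
        else L.n + L.twoM + L.bIdx e)
  else
    Sum.elim
      (fun w => if L.vIdx w ≤ 2 then L.vIdx w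
        else L.twoM + sSup {i | 1 ≤ i ∧ i ≤ L.ell ∧ Sum.inr (L.eb i) ∈ I} + L.vIdx w)
      (fun e => if Sum.inr e ∈ A then 2 + L.aIdx e
        else (if L.bIdx e ≤ sSup {i | 1 ≤ i ∧ i ≤ L.ell ∧ Sum.inr (L.eb i) ∈ I}
          then 2 + L.twoM + L.bIdx e else L.n + L.twoM + L.bIdx e))

end StdLabeling

/-- The set `S` lexicographically precedes the set `T`, comparing the sorted sequences of
ranks of their elements. -/
noncomputable def setLex {G : Multigraph} (f : G.El → ℕ) (S T : Set G.El) : Prop :=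
  List.Lex (· < ·)
    (Finset.sort (Finset.image f (Set.toFinite S).toFinset) (· ≤ ·))
    (Finset.sort (Finset.image f (Set.toFinite T).toFinset) (· ≤ ·))

namespace StdLabeling

variable {G : Multigraph} {A : Set G.El} (L : StdLabeling G A)

/-- The pair of endpoints of the bundle, as ground-set elements. -/
def v12set : Set G.El := {Sum.inl (L.v 1), Sum.inl (L.v 2)}

/-- The atom ordering `J ≺_atom^I J'` of the atoms of the interval `[I, G]`. -/
noncomputable def atomPrec (I J J' : EvenPoset G A) : Prop :=
  (((J.1 \ I.1) ∩ L.v12set).ncard = 1 ∧ ((J'.1 \ I.1) ∩ L.v12set).ncard = 2) ∨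
    setLex (L.rank I.1) (J.1 \ I.1) (J'.1 \ I.1)

/-- `c` is a falling maximal chain of the poset of `A`-even subgraphs, with respect to the
integer CL-labeling obtained from the recursive atom orderings `≺_atom` by the standard
Björner–Wachs construction: a maximal chain is falling iff each element `x_{t+1}` of the
chain lies above an atom of `[x_{t-1}, ⊤]` that precedes `x_t` in `≺_atom^{x_{t-1}}`. -/
noncomputable def Falling (c : List (EvenPoset G A)) : Prop :=
  SatChain (EvenPoset G A) ⊥ ⊤ c ∧
  ∀ t, ∀ _ : 1 ≤ t, ∀ h2 : t + 1 < c.length,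
    ∃ z : EvenPoset G A,
      c.get ⟨t - 1, by omega⟩ ⋖ z ∧
      L.atomPrec (c.get ⟨t - 1, by omega⟩) z (c.get ⟨t, by omega⟩) ∧
      z ≤ c.get ⟨t + 1, h2⟩

end StdLabeling
/-- `e` is an element of `B ∩ A` (a multiple edge belonging to `A`). -/
def Multigraph.inBA (G : Multigraph) (A : Set G.El) (e : G.E) : Prop :=
  G.Multiple e ∧ Sum.inr e ∈ A

/-- `e` is an element of `B ∖ A` (a multiple edge not belonging to `A`). -/
def Multigraph.inBnA (G : Multigraph) (A : Set G.El) (e : G.E) : Prop :=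
  G.Multiple e ∧ Sum.inr e ∉ A

/-- `i` is the index of the smallest-labelled vertex outside `I ∪ {v 1, v 2}`,
i.e. `v i = min (V ∖ (I ∪ {1,2}))`. -/
def StdLabeling.vminP {G : Multigraph} {A : Set G.El} (L : StdLabeling G A)
    (I : Set G.El) (i : ℕ) : Prop :=
  3 ≤ i ∧ i ≤ L.n ∧ Sum.inl (L.v i) ∉ I ∧ ∀ j, 3 ≤ j → j < i → Sum.inl (L.v j) ∈ I

/-!
Every graph of the list `L` has a single bundle. If `J ∖ I` contained an edge `a ∈ B ∩ A` and an
edge `b ∈ B ∖ A`, then deleting `b` from `J` would keep the parallel edge `a`, so adjacency and the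
components would not change, and since `b ∉ A` neither would their intersections with `A`. Thus
`J ∖ {b}` is `A`-even and lies strictly between `I` and `J`. When `J` is the whole graph, this
uses that a graph with one bundle is itself `A`-even for admissible `A`.
-/

namespace Multigraph

variable {G H : Multigraph}

theorem sameEnds_refl (e : G.E) : G.sameEnds e e := Or.inl ⟨rfl, rfl⟩

theorem sameEnds.trans {a b c : G.E} (h : G.sameEnds a b) (h' : G.sameEnds b c) :
    G.sameEnds a c := by
  unfold sameEnds at *
  grind

theorem sameEnds.ends_iff {e e' : G.E} (h : G.sameEnds e e') {u v : G.V} :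
    ((G.fst e = u ∧ G.snd e = v) ∨ (G.fst e = v ∧ G.snd e = u)) ↔
      ((G.fst e' = u ∧ G.snd e' = v) ∨ (G.fst e' = v ∧ G.snd e' = u)) := by
  rcases h with ⟨h1, h2⟩ | ⟨h1, h2⟩ <;> grind

def AtMostOneBundle (G : Multigraph) : Prop :=
  ∀ e e', G.Multiple e → G.Multiple e' → G.sameEnds e e'

theorem Iso.sameEnds_iff (φ : G.Iso H) (e d : G.E) :
    H.sameEnds (φ.eEquiv e) (φ.eEquiv d) ↔ G.sameEnds e d := by
  rcases φ.ends e with ⟨h1, h2⟩ | ⟨h1, h2⟩ <;> rcases φ.ends d with ⟨h3, h4⟩ | ⟨h3, h4⟩ <;>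
    simp only [sameEnds, h1, h2, h3, h4, φ.vEquiv.apply_eq_iff_eq] <;> tauto

theorem Iso.multiple_iff (φ : G.Iso H) (e : G.E) :
    H.Multiple (φ.eEquiv e) ↔ G.Multiple e := by
  constructor
  · rintro ⟨d, hne, hs⟩
    rw [← φ.eEquiv.apply_symm_apply d, φ.sameEnds_iff] at hs
    exact ⟨φ.eEquiv.symm d, fun h => hne (by rw [← h, Equiv.apply_symm_apply]), hs⟩
  · rintro ⟨d, hne, hs⟩
    exact ⟨φ.eEquiv d, φ.eEquiv.injective.ne hne, (φ.sameEnds_iff e d).2 hs⟩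

theorem AtMostOneBundle.of_iso (φ : G.Iso H) (h : H.AtMostOneBundle) : G.AtMostOneBundle :=
  fun e e' he he' =>
    (φ.sameEnds_iff e e').1 (h _ _ ((φ.multiple_iff e).2 he) ((φ.multiple_iff e').2 he'))

end Multigraph

open Multigraph

section ListL

variable {n m k : ℕ} {hn : 2 ≤ n} {f g : ℕ → ℕ} {hf : ∀ i, i < k → f i < n}
  {hg : ∀ i, i < k → g i < n} {hfg : ∀ i, i < k → f i ≠ g i}

theorem mkGraph_atMostOneBundle
    (hbundle : ∀ i < k, ¬(f i = 0 ∧ g i = 1) ∧ ¬(f i = 1 ∧ g i = 0))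
    (hsimple : ∀ i < k, ∀ j < k, i ≠ j → ¬(f i = f j ∧ g i = g j) ∧ ¬(f i = g j ∧ g i = f j)) :
    (mkGraph n m k hn f g hf hg hfg).AtMostOneBundle := by
  have not_multiple : ∀ i, ¬ (mkGraph n m k hn f g hf hg hfg).Multiple (Sum.inr i) := by
    rintro i ⟨b | j, hne, hs⟩
    · simp only [sameEnds, mkGraph, Sum.elim_inl, Sum.elim_inr, Fin.ext_iff] at hs
      exact (hbundle i i.2).elim (hs.elim · ·)
    · have hij : i.1 ≠ j.1 := fun h => hne (by rw [Fin.ext h])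
      simp only [sameEnds, mkGraph, Sum.elim_inr, Fin.ext_iff] at hs
      exact (hsimple i i.2 j j.2 hij).elim (hs.elim · ·)
  rintro (a | i) (b | j) ha hb
  · exact Or.inl ⟨rfl, rfl⟩
  · exact absurd hb (not_multiple j)
  · exact absurd ha (not_multiple i)
  · exact absurd ha (not_multiple i)

theorem tildeP_atMostOneBundle (n m : ℕ) : (tildeP n m).AtMostOneBundle := by
  unfold tildeP
  apply mkGraph_atMostOneBundle <;> intros <;> grind

theorem tildeP'_atMostOneBundle (n m : ℕ) : (tildeP' n m).AtMostOneBundle := by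
  unfold tildeP'
  apply mkGraph_atMostOneBundle <;> intros <;> grind

theorem tildeS_atMostOneBundle (j m : ℕ) : (tildeS j m).AtMostOneBundle := by
  unfold tildeS
  apply mkGraph_atMostOneBundle <;> intros <;> grind

theorem tildeT_atMostOneBundle (j m : ℕ) : (tildeT j m).AtMostOneBundle := by
  unfold tildeT
  apply mkGraph_atMostOneBundle <;> intros <;> grind

theorem tildeS'_atMostOneBundle (j m : ℕ) : (tildeS' j m).AtMostOneBundle := by
  unfold tildeS'
  apply mkGraph_atMostOneBundle <;> intros <;> grind

theorem tildeT'_atMostOneBundle (j m : ℕ) : (tildeT' j m).AtMostOneBundle := by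
  unfold tildeT'
  apply mkGraph_atMostOneBundle <;> intros <;> grind

end ListL

theorem InListL.atMostOneBundle {G : Multigraph} (hL : InListL G) : G.AtMostOneBundle := by
  rcases hL with ⟨m, -, ⟨n, ⟨φ⟩⟩ | ⟨j, ⟨φ⟩⟩ | ⟨j, ⟨φ⟩⟩⟩ | ⟨m, -, ⟨n, ⟨φ⟩⟩ | ⟨j, ⟨φ⟩⟩ | ⟨j, ⟨φ⟩⟩⟩
  · exact (tildeP_atMostOneBundle n m).of_iso φ
  · exact (tildeS_atMostOneBundle j m).of_iso φ
  · exact (tildeT_atMostOneBundle j m).of_iso φ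
  · exact (tildeP'_atMostOneBundle n m).of_iso φ
  · exact (tildeS'_atMostOneBundle j m).of_iso φ
  · exact (tildeT'_atMostOneBundle j m).of_iso φ

namespace Multigraph

variable {G : Multigraph} {A S : Set G.El} {e e' : G.E}

theorem adjIn_diff_singleton (hse : G.sameEnds e e') (hne : e' ≠ e) (he' : Sum.inr e' ∈ S) :
    G.adjIn (S \ {Sum.inr e}) = G.adjIn S := by
  have he'S : Sum.inr e' ∈ S \ {Sum.inr e} := ⟨he', by simpa using hne⟩
  funext u v
  apply propext
  simp only [adjIn, Set.mem_sdiff, Set.mem_singleton_iff, reduceCtorEq, not_false_eq_true,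
    and_true]
  constructor
  · rintro ⟨hu, hv, f, hf, hfS⟩
    exact ⟨hu, hv, f, hf, fun hm => (hfS hm).1⟩
  · rintro ⟨hu, hv, f, hf, hfS⟩
    by_cases hfe : f = e
    · subst hfe
      exact ⟨hu, hv, e', hse.ends_iff.1 hf, fun _ => he'S⟩
    · exact ⟨hu, hv, f, hf, fun hm => ⟨hfS hm, by simpa using hfe⟩⟩

theorem SemiInduced.diff_singleton (hS : G.SemiInduced S) (hse : G.sameEnds e e')
    (hne : e' ≠ e) (he' : Sum.inr e' ∈ S) : G.SemiInduced (S \ {Sum.inr e}) := by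
  refine ⟨fun f hf => ?_, fun f hm hu hv => ?_⟩
  · obtain ⟨hm, hu, hv⟩ := hS.1 f hf.1
    exact ⟨hm, ⟨hu, by simp⟩, ⟨hv, by simp⟩⟩
  · obtain ⟨f', hff', hf'S⟩ := hS.2 f hm hu.1 hv.1
    by_cases hfe : f' = e
    · subst hfe
      exact ⟨e', hff'.trans hse, he', by simpa using hne⟩
    · exact ⟨f', hff', hf'S, by simpa using hfe⟩

theorem componentIn_diff_singleton_inter (hse : G.sameEnds e e') (hne : e' ≠ e)
    (he' : Sum.inr e' ∈ S) (heA : Sum.inr e ∉ A) (v : G.V) :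
    G.componentIn (S \ {Sum.inr e}) v ∩ A = G.componentIn S v ∩ A := by
  ext x
  simp only [componentIn, adjIn_diff_singleton hse hne he', Set.mem_inter_iff,
    Set.mem_sdiff, Set.mem_singleton_iff]
  constructor
  · rintro ⟨hx | ⟨f, rfl, hfS, hr⟩, hxA⟩
    · exact ⟨Or.inl hx, hxA⟩
    · exact ⟨Or.inr ⟨f, rfl, hfS.1, hr⟩, hxA⟩
  · rintro ⟨hx | ⟨f, rfl, hfS, hr⟩, hxA⟩
    · exact ⟨Or.inl hx, hxA⟩
    · exact ⟨Or.inr ⟨f, rfl, ⟨hfS, fun h => heA (h ▸ hxA)⟩, hr⟩, hxA⟩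

theorem AEvenMember.diff_singleton (hS : G.AEvenMember A S) (hse : G.sameEnds e e')
    (hne : e' ≠ e) (he' : Sum.inr e' ∈ S) (heA : Sum.inr e ∉ A) :
    G.AEvenMember A (S \ {Sum.inr e}) :=
  ⟨hS.1.diff_singleton hse hne he', fun v hv => by
    rw [componentIn_diff_singleton_inter hse hne he' heA]
    exact hS.2 v hv.1⟩

theorem inl_mem_topSet (v : G.V) : Sum.inl v ∈ G.topSet := fun _ h => nomatch h

theorem inr_mem_topSet_iff : Sum.inr e ∈ G.topSet ↔ G.Multiple e :=
  ⟨fun h => h e rfl, fun h _ hf => Sum.inr_injective hf ▸ h⟩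

theorem adjIn_topSet : G.adjIn G.topSet = G.adj := by
  funext u v
  apply propext
  constructor
  · rintro ⟨-, -, f, hf, -⟩
    exact ⟨f, hf⟩
  · rintro ⟨f, hf⟩
    exact ⟨inl_mem_topSet u, inl_mem_topSet v, f, hf, inr_mem_topSet_iff.2⟩

theorem semiInduced_topSet : G.SemiInduced G.topSet :=
  ⟨fun _ hf => ⟨inr_mem_topSet_iff.1 hf, inl_mem_topSet _, inl_mem_topSet _⟩,
    fun f hm _ _ => ⟨f, sameEnds_refl f, inr_mem_topSet_iff.2 hm⟩⟩

theorem componentIn_topSet_inter (hA : ∀ e, Sum.inr e ∈ A → G.Multiple e) (v : G.V) :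
    G.componentIn G.topSet v ∩ A =
      Sum.inl '' {u | G.reachable v u ∧ Sum.inl u ∈ A} ∪
        Sum.inr '' {f | G.reachable v (G.fst f) ∧ Sum.inr f ∈ A} := by
  ext x
  simp only [componentIn, adjIn_topSet, Set.mem_inter_iff, Set.mem_union, Set.mem_image]
  constructor
  · rintro ⟨⟨u, rfl, hr⟩ | ⟨f, rfl, -, hr⟩, hxA⟩
    · exact Or.inl ⟨u, ⟨hr, hxA⟩, rfl⟩
    · exact Or.inr ⟨f, ⟨hr, hxA⟩, rfl⟩
  · rintro (⟨u, ⟨hr, huA⟩, rfl⟩ | ⟨f, ⟨hr, hfA⟩, rfl⟩)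
    · exact ⟨Or.inl ⟨u, rfl, hr⟩, huA⟩
    · exact ⟨Or.inr ⟨f, rfl, inr_mem_topSet_iff.2 (hA f hfA), hr⟩, hfA⟩

theorem Admissible.even_ncard_reachable_edges (hA : G.Admissible A)
    (hone : G.AtMostOneBundle) (v : G.V) :
    Even {f | G.reachable v (G.fst f) ∧ Sum.inr f ∈ A}.ncard := by
  rcases Set.eq_empty_or_nonempty {f | G.reachable v (G.fst f) ∧ Sum.inr f ∈ A}
    with hempty | ⟨e, hr, heA⟩
  · simp [hempty]
  have hm : G.Multiple e := hA.1 e heA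
  suffices {f | G.reachable v (G.fst f) ∧ Sum.inr f ∈ A} = {f | G.sameEnds e f ∧ Sum.inr f ∈ A}
    from this ▸ (hA.2.2.2 e hm).2
  ext f
  refine ⟨fun ⟨_, hfA⟩ => ⟨hone e f hm (hA.1 f hfA), hfA⟩, fun ⟨hef, hfA⟩ => ⟨?_, hfA⟩⟩
  rcases hef with ⟨h, -⟩ | ⟨-, h⟩
  · exact h ▸ hr
  · exact h ▸ hr.tail ⟨e, Or.inl ⟨rfl, rfl⟩⟩

theorem Admissible.aEvenMember_topSet (hA : G.Admissible A) (hone : G.AtMostOneBundle) :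
    G.AEvenMember A G.topSet := by
  refine ⟨semiInduced_topSet, fun v _ => ?_⟩
  rw [componentIn_topSet_inter hA.1, Set.ncard_union_eq ?_ (Set.toFinite _) (Set.toFinite _),
    Set.ncard_image_of_injective _ Sum.inl_injective,
    Set.ncard_image_of_injective _ Sum.inr_injective]
  · exact (hA.2.1 v).add (hA.even_ncard_reachable_edges hone v)
  · exact Set.disjoint_left.2 fun _ ⟨_, _, hu⟩ ⟨_, _, hf⟩ => nomatch hu.trans hf.symm

end Multigraph

theorem EvenPoset.aEvenMember_diff_singleton {G : Multigraph} {A : Set G.El}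
    (hA : G.Admissible A) (hone : G.AtMostOneBundle) (J : EvenPoset G A) {a b : G.E}
    (hba : G.sameEnds b a) (hab : a ≠ b) (haJ : Sum.inr a ∈ J.1) (hbA : Sum.inr b ∉ A) :
    G.AEvenMember A (J.1 \ {Sum.inr b}) := by
  rcases J with ⟨J, rfl | rfl | hJ⟩
  · exact absurd haJ (Set.notMem_empty _)
  · exact (hA.aEvenMember_topSet hone).diff_singleton hba hab haJ hbA
  · exact hJ.diff_singleton hba hab haJ hbA

theorem cover_diff_not_both_bundle_types_general (G : Multigraph) (hL : InListL G)
    (A : Set G.El) (hA : G.Admissible A)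
    (I J : EvenPoset G A) (hcov : I ⋖ J) :
    (∀ e : G.E, G.Multiple e → Sum.inr e ∈ J.1 → Sum.inr e ∉ I.1 → Sum.inr e ∉ A) ∨
    (∀ e : G.E, G.Multiple e → Sum.inr e ∈ J.1 → Sum.inr e ∉ I.1 → Sum.inr e ∈ A) := by
  by_contra! ⟨⟨a, ha, haJ, haI, haA⟩, ⟨b, hb, hbJ, hbI, hbA⟩⟩
  have hone := hL.atMostOneBundle
  have hab : a ≠ b := fun h => hbA (h ▸ haA)
  let K : EvenPoset G A := ⟨J.1 \ {Sum.inr b},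
    Or.inr (Or.inr (J.aEvenMember_diff_singleton hA hone (hone b a hb ha) hab haJ hbA))⟩
  have hIK : I < K :=
    (Set.ssubset_iff_of_subset (Set.subset_sdiff_singleton hcov.le hbI)).2
      ⟨Sum.inr a, ⟨haJ, by simpa using hab⟩, haI⟩
  have hKJ : K < J := Set.sdiff_singleton_ssubset.2 hbJ
  exact hcov.2 hIK hKJ

/-- For a graph `G` of the list `L` with bundle `B` and an admissible collection `A`,
if `I ⋖ J` is a cover relation of `P^even_{G,A}` and `J ∖ I` contains a bundle edge,
then `J ∖ I` cannot contain both an element of `B ∩ A` and an element of `B ∖ A`. -/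
theorem cover_diff_not_both_bundle_types (G : Multigraph) (hL : InListL G)
    (A : Set G.El) (hA : G.Admissible A)
    (I J : EvenPoset G A) (hcov : I ⋖ J)
    (hB : ∃ e : G.E, G.Multiple e ∧ Sum.inr e ∈ J.1 ∧ Sum.inr e ∉ I.1) :
    (∀ e : G.E, G.Multiple e → Sum.inr e ∈ J.1 → Sum.inr e ∉ I.1 → Sum.inr e ∉ A) ∨
    (∀ e : G.E, G.Multiple e → Sum.inr e ∈ J.1 → Sum.inr e ∉ I.1 → Sum.inr e ∈ A) :=
  cover_diff_not_both_bundle_types_general G hL A hA I J hcov
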